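/- Let $k$ be a positive integer, let $s \geq 3$ be an integer, and set $n = (k+2)s$. Then the signless Laplacian spectral radius of the graph $K_s \vee (n-s)K_1$ is strictly less than $\theta(k,n)$, the largest real root of $x^{3}-(3n-2k-5)x^{2}+n(2n-2k-5)x-2(n-k-3)(n-k-2)=0$. -/

import Mathlib

/-- The signless Laplacian matrix `Q(G) = D(G) + A(G)` of a simple graph, over `ℝ`. -/
noncomputable def signlessLap {V : Type*} [Fintype V] [DecidableEq V] (G : SimpleGraph V) :
    Matrix V V ℝ :=
  letI : DecidableRel G.Adj := Classical.decRel _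
  G.degMatrix ℝ + G.adjMatrix ℝ

/-- The signless Laplacian spectral radius `q(G)`: the largest eigenvalue of `Q(G)`. -/
noncomputable def qRadius {V : Type*} [Fintype V] [DecidableEq V] (G : SimpleGraph V) : ℝ :=
  sSup (spectrum ℝ (signlessLap G))

/-- `G` has a spanning tree whose leaf degree is at most `k`, i.e. a spanning tree `T`
in which every vertex is adjacent (in `T`) to at most `k` leaves of `T`. -/
def HasSpanningTreeWithLeafDegLE {V : Type*} (G : SimpleGraph V) (k : ℕ) : Prop :=
  ∃ T : SimpleGraph V, T ≤ G ∧ T.IsTree ∧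
    ∀ v : V, {u : V | T.Adj v u ∧ (T.neighborSet u).ncard = 1}.ncard ≤ k

/-- The join `G ∨ H` of two vertex-disjoint graphs: all edges between the two parts. -/
def SimpleGraph.graphJoin {α β : Type*} (G : SimpleGraph α) (H : SimpleGraph β) :
    SimpleGraph (α ⊕ β) where
  Adj x y :=
    match x, y with
    | Sum.inl a, Sum.inl b => G.Adj a b
    | Sum.inr a, Sum.inr b => H.Adj a b
    | Sum.inl _, Sum.inr _ => True
    | Sum.inr _, Sum.inl _ => True
  symm := ⟨by rintro (a | a) (b | b) h <;> first | trivial | exact G.symm.symm _ _ h | exact H.symm.symm _ _ h⟩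
  loopless := ⟨by rintro (a | a) h <;> first | exact G.loopless.irrefl _ h | exact H.loopless.irrefl _ h⟩

/-- The disjoint union `G ∪ H` of two vertex-disjoint graphs. -/
def SimpleGraph.graphDisjUnion {α β : Type*} (G : SimpleGraph α) (H : SimpleGraph β) :
    SimpleGraph (α ⊕ β) where
  Adj x y :=
    match x, y with
    | Sum.inl a, Sum.inl b => G.Adj a b
    | Sum.inr a, Sum.inr b => H.Adj a b
    | _, _ => False
  symm := ⟨by rintro (a | a) (b | b) h <;> first | trivial | exact G.symm.symm _ _ h | exact H.symm.symm _ _ h⟩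
  loopless := ⟨by rintro (a | a) h <;> first | exact G.loopless.irrefl _ h | exact H.loopless.irrefl _ h⟩


/-!
An eigenvector of `Q(K_s ∨ tK₁)` whose entries on the clique do not sum to zero forces its
eigenvalue to be a root of `x² - (3s + t - 2)x + 2s(s - 1)`; otherwise the eigenvalue is `s` or
`s + t - 2 = n - 2`. For `t = (k + 1)s` the cubic defining `θ` takes the value `-2k(k + 1)` at
`n - 2`, and dividing it by the quadratic leaves a remainder that is negative on `[n - 2, ∞)`.
So the cubic is negative at `n - 2` and at every larger eigenvalue, and since it tends to `+∞`,
each of these lies below one of its roots.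
-/

open Filter Polynomial Matrix

lemma tendsto_cubic_atTop (p q r : ℝ) :
    Tendsto (fun x : ℝ ↦ x ^ 3 - p * x ^ 2 + q * x - r) atTop atTop := by
  have hmonic : (X ^ 3 - C p * X ^ 2 + C q * X - C r : ℝ[X]).Monic := by monicity!
  have hdeg : (X ^ 3 - C p * X ^ 2 + C q * X - C r : ℝ[X]).natDegree = 3 := by compute_degree!
  have := tendsto_atTop_of_leadingCoeff_nonneg (X ^ 3 - C p * X ^ 2 + C q * X - C r : ℝ[X])
    (by rw [← natDegree_pos_iff_degree_pos, hdeg]; norm_num) (by rw [hmonic.leadingCoeff]; norm_num)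
  simpa using this

lemma lt_of_neg_of_forall_root_le {f : ℝ → ℝ} (hf : Continuous f) (htop : Tendsto f atTop atTop)
    {θ x : ℝ} (hmax : ∀ y, f y = 0 → y ≤ θ) (hx : f x < 0) : x < θ := by
  obtain ⟨M, hfM, hxM⟩ := ((htop.eventually_gt_atTop 0).and (eventually_gt_atTop x)).exists
  obtain ⟨y, hy, hfy⟩ := intermediate_value_Ioo hxM.le hf.continuousOn ⟨hx, hfM⟩
  exact hy.1.trans_le (hmax y hfy)

lemma Matrix.exists_mulVec_eq_smul_of_mem_spectrum {ι : Type*} [Fintype ι] [DecidableEq ι]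
    {A : Matrix ι ι ℝ} {μ : ℝ} (h : μ ∈ spectrum ℝ A) : ∃ v, v ≠ 0 ∧ A *ᵥ v = μ • v := by
  rw [← Matrix.spectrum_toLin', ← Module.End.hasEigenvalue_iff_mem_spectrum] at h
  obtain ⟨v, hv⟩ := h.exists_hasEigenvector
  exact ⟨v, hv.2, by simpa using hv.apply_eq_smul⟩

section signlessLap

variable {V : Type*} [Fintype V] [DecidableEq V] (G : SimpleGraph V)

lemma signlessLap_mulVec_apply [DecidableRel G.Adj] (v : V → ℝ) (i : V) :
    (signlessLap G *ᵥ v) i = G.degree i * v i + ∑ u ∈ G.neighborFinset i, v u := by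
  have : signlessLap G = G.degMatrix ℝ + G.adjMatrix ℝ := by
    unfold signlessLap; congr!
  rw [this, Matrix.add_mulVec, Pi.add_apply, SimpleGraph.degMatrix_mulVec_apply,
    SimpleGraph.adjMatrix_mulVec_apply]

variable {G} in
lemma qRadius_lt_of_forall_lt {θ : ℝ} (hθ : 0 < θ)
    (h : ∀ μ ∈ spectrum ℝ (signlessLap G), μ < θ) : qRadius G < θ := by
  rcases (spectrum ℝ (signlessLap G)).eq_empty_or_nonempty with hempty | hne
  · rwa [qRadius, hempty, Real.sSup_empty]
  · exact ((signlessLap G).finite_spectrum.csSup_lt_iff hne).2 h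

end signlessLap

namespace SimpleGraph

def completeSplitGraph (α β : Type*) : SimpleGraph (α ⊕ β) :=
  (⊤ : SimpleGraph α).graphJoin (⊥ : SimpleGraph β)

variable {α β : Type*} [Fintype α] [Fintype β]

section neighborFinset

variable [DecidableRel (completeSplitGraph α β).Adj] {M : Type*} [AddCommGroup M]

lemma sum_neighborFinset_completeSplitGraph_inl [DecidableEq α] (f : α ⊕ β → M) (a : α) :
    ∑ u ∈ (completeSplitGraph α β).neighborFinset (.inl a), f u
      = ∑ b, f (.inl b) - f (.inl a) + ∑ c, f (.inr c) := by
  rw [neighborFinset_eq_filter, Finset.sum_filter, Fintype.sum_sum_type]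
  simp [completeSplitGraph, graphJoin, Finset.sum_ite, Finset.filter_ne, Finset.sum_erase_eq_sub]

lemma sum_neighborFinset_completeSplitGraph_inr (f : α ⊕ β → M) (c : β) :
    ∑ u ∈ (completeSplitGraph α β).neighborFinset (.inr c), f u = ∑ b, f (.inl b) := by
  rw [neighborFinset_eq_filter, Finset.sum_filter, Fintype.sum_sum_type]
  simp [completeSplitGraph, graphJoin]

end neighborFinset

variable [DecidableEq α] [DecidableEq β] (v : α ⊕ β → ℝ)

lemma signlessLap_completeSplitGraph_mulVec_inl (a : α) :
    (signlessLap (completeSplitGraph α β) *ᵥ v) (.inl a)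
      = (Fintype.card α + Fintype.card β - 1) * v (.inl a)
        + (∑ b, v (.inl b) - v (.inl a)) + ∑ c, v (.inr c) := by
  classical
  rw [signlessLap_mulVec_apply, ← card_neighborFinset_eq_degree, Finset.card_eq_sum_ones,
    Nat.cast_sum, sum_neighborFinset_completeSplitGraph_inl,
    sum_neighborFinset_completeSplitGraph_inl]
  simp only [Nat.cast_one, Finset.sum_const, Finset.card_univ, nsmul_eq_mul, mul_one]
  ring

lemma signlessLap_completeSplitGraph_mulVec_inr (c : β) :
    (signlessLap (completeSplitGraph α β) *ᵥ v) (.inr c)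
      = Fintype.card α * v (.inr c) + ∑ b, v (.inl b) := by
  classical
  rw [signlessLap_mulVec_apply, ← card_neighborFinset_eq_degree, Finset.card_eq_sum_ones,
    Nat.cast_sum, sum_neighborFinset_completeSplitGraph_inr,
    sum_neighborFinset_completeSplitGraph_inr]
  simp

lemma eigenvalue_signlessLap_completeSplitGraph {μ : ℝ}
    (hμ : μ ∈ spectrum ℝ (signlessLap (completeSplitGraph α β))) :
    μ = Fintype.card α + Fintype.card β - 2 ∨ μ = Fintype.card α ∨
      μ ^ 2 - (3 * Fintype.card α + Fintype.card β - 2) * μ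
        + 2 * Fintype.card α * (Fintype.card α - 1) = 0 := by
  obtain ⟨v, hv0, hv⟩ := Matrix.exists_mulVec_eq_smul_of_mem_spectrum hμ
  set s : ℝ := (Fintype.card α : ℝ)
  set t : ℝ := (Fintype.card β : ℝ)
  set S := ∑ b, v (.inl b)
  set T := ∑ c, v (.inr c)
  have hinl (a : α) : (s + t - 1) * v (.inl a) + (S - v (.inl a)) + T = μ * v (.inl a) := by
    rw [← signlessLap_completeSplitGraph_mulVec_inl, hv, Pi.smul_apply, smul_eq_mul]
  have hinr (c : β) : s * v (.inr c) + S = μ * v (.inr c) := by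
    rw [← signlessLap_completeSplitGraph_mulVec_inr, hv, Pi.smul_apply, smul_eq_mul]
  by_cases hS : S = 0
  · by_cases hμs : μ = s
    · exact .inr (.inl hμs)
    refine .inl (by_contra fun hμn ↦ hv0 ?_)
    have hvr (c : β) : v (.inr c) = 0 :=
      (mul_eq_zero.1 (by linear_combination hS - hinr c : (μ - s) * v (.inr c) = 0)).resolve_left
        (sub_ne_zero.2 hμs)
    have hT : T = 0 := Finset.sum_eq_zero fun c _ ↦ hvr c
    funext x
    rcases x with a | c
    · exact (mul_eq_zero.1 (by linear_combination hS + hT - hinl a :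
        (μ - (s + t - 2)) * v (.inl a) = 0)).resolve_left (sub_ne_zero.2 hμn)
    · exact hvr c
  · have hsumL : (2 * s + t - 2) * S + s * T = μ * S := by
      have := Finset.sum_congr rfl fun a (_ : a ∈ Finset.univ) ↦ hinl a
      simp only [Finset.sum_add_distrib, Finset.sum_sub_distrib, ← Finset.mul_sum,
        Finset.sum_const, Finset.card_univ, nsmul_eq_mul] at this
      linear_combination this
    have hsumR : s * T + t * S = μ * T := by
      have := Finset.sum_congr rfl fun c (_ : c ∈ Finset.univ) ↦ hinr c
      simp only [Finset.sum_add_distrib, ← Finset.mul_sum, Finset.sum_const, Finset.card_univ,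
        nsmul_eq_mul] at this
      linear_combination this
    refine .inr (.inr ((mul_eq_zero.1 ?_).resolve_right hS))
    linear_combination (s - μ) * hsumL - s * hsumR

end SimpleGraph

/-- The cubic whose largest root is `θ(k, n)`. -/
def thetaCubic (k n x : ℝ) : ℝ :=
  x ^ 3 - (3 * n - 2 * k - 5) * x ^ 2 + n * (2 * n - 2 * k - 5) * x - 2 * (n - k - 3) * (n - k - 2)

lemma thetaCubic_sub_two (k n : ℝ) : thetaCubic k n (n - 2) = -2 * k * (k + 1) := by
  unfold thetaCubic; ring

lemma thetaCubic_neg_of_quadratic_root {k s x : ℝ} (hk : 1 ≤ k) (hs : 3 ≤ s)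
    (hq : x ^ 2 - (3 * s + (k + 1) * s - 2) * x + 2 * s * (s - 1) = 0)
    (hx : (k + 2) * s - 2 < x) : thetaCubic k ((k + 2) * s) x < 0 := by
  have hdiv : thetaCubic k ((k + 2) * s) x
      = (x + 2 * k + 3 - 2 * (k + 1) * s)
          * (x ^ 2 - (3 * s + (k + 1) * s - 2) * x + 2 * s * (s - 1))
        - 2 * ((s - 1) * ((k + 1) * s - (2 * k + 3)) * (x - ((k + 2) * s - 2)))
        - 2 * k * (k + 1) - 2 * (s * (k * s - 2 * k - 1) * ((k + 1) * s - 1)) := by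
    unfold thetaCubic; ring
  have hslope : 0 ≤ (s - 1) * ((k + 1) * s - (2 * k + 3)) * (x - ((k + 2) * s - 2)) :=
    mul_nonneg (mul_nonneg (by linarith) (by nlinarith)) (by linarith)
  have hvalue : 0 ≤ s * (k * s - 2 * k - 1) * ((k + 1) * s - 1) :=
    mul_nonneg (mul_nonneg (by linarith) (by nlinarith)) (by nlinarith)
  rw [hdiv, hq, mul_zero, zero_sub]
  nlinarith

theorem qRadius_complete_split_lt_theta_general (k s n : ℕ) (hk : 1 ≤ k) (hs : 3 ≤ s)
    (hn : n = (k + 2) * s) (θ : ℝ)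
    (hmax : ∀ x : ℝ, x ^ 3 - (3 * (n : ℝ) - 2 * k - 5) * x ^ 2 + (n : ℝ) * (2 * (n : ℝ) - 2 * k - 5) * x - 2 * ((n : ℝ) - k - 3) * ((n : ℝ) - k - 2) = 0 → x ≤ θ) :
    qRadius ((⊤ : SimpleGraph (Fin s)).graphJoin (⊥ : SimpleGraph (Fin (n - s)))) < θ := by
  have hkR : (1 : ℝ) ≤ k := by exact_mod_cast hk
  have hsR : (3 : ℝ) ≤ s := by exact_mod_cast hs
  have hnR : (n : ℝ) = (k + 2) * s := by rw [hn]; push_cast; ring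
  have htR : ((n - s : ℕ) : ℝ) = (k + 1) * s := by
    rw [Nat.cast_sub (hn ▸ Nat.le_mul_of_pos_left s (by omega)), hnR]; ring
  have hlt_of_neg (x : ℝ) (hx : thetaCubic k n x < 0) : x < θ :=
    lt_of_neg_of_forall_root_le (by fun_prop) (tendsto_cubic_atTop _ _ _) hmax hx
  have hn2 : (n : ℝ) - 2 < θ := hlt_of_neg _ (by rw [thetaCubic_sub_two]; nlinarith)
  refine qRadius_lt_of_forall_lt (by nlinarith) fun μ hμ ↦ ?_
  have heig :=
    SimpleGraph.eigenvalue_signlessLap_completeSplitGraph (α := Fin s) (β := Fin (n - s)) hμ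
  rw [Fintype.card_fin, Fintype.card_fin, htR] at heig
  rcases heig with h | h | h
  · linarith
  · nlinarith
  · by_cases hμn : μ ≤ n - 2
    · linarith
    · exact hlt_of_neg μ (hnR ▸ thetaCubic_neg_of_quadratic_root hkR hsR h (by linarith))

/-- With `n = (k+2)s` and `s ≥ 3`, the signless Laplacian spectral radius of
`K_s ∨ (n-s)K₁` is strictly less than `θ(k,n)`, the largest real root of
`x³-(3n-2k-5)x²+n(2n-2k-5)x-2(n-k-3)(n-k-2) = 0`. -/
theorem qRadius_complete_split_lt_theta (k s n : ℕ) (hk : 1 ≤ k) (hs : 3 ≤ s)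
    (hn : n = (k + 2) * s) (θ : ℝ)
    (hroot : θ ^ 3 - (3 * (n : ℝ) - 2 * k - 5) * θ ^ 2 + (n : ℝ) * (2 * (n : ℝ) - 2 * k - 5) * θ - 2 * ((n : ℝ) - k - 3) * ((n : ℝ) - k - 2) = 0)
    (hmax : ∀ x : ℝ, x ^ 3 - (3 * (n : ℝ) - 2 * k - 5) * x ^ 2 + (n : ℝ) * (2 * (n : ℝ) - 2 * k - 5) * x - 2 * ((n : ℝ) - k - 3) * ((n : ℝ) - k - 2) = 0 → x ≤ θ) :
    qRadius ((⊤ : SimpleGraph (Fin s)).graphJoin (⊥ : SimpleGraph (Fin (n - s)))) < θ :=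
  qRadius_complete_split_lt_theta_general k s n hk hs hn θ hmax
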